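/- arXiv:2605.06592 — 6 statements merged into one kernel-verified Lean document; each statement's English description precedes it below -/
import Mathlib

section
/- Let E be a real inner product space and let v, w ∈ E with w ≠ 0. Then sin(angle(v, w)) ≤ ‖v − w‖ / ‖w‖. -/
open InnerProductGeometry Real RealInnerProductSpace

/-- In a real inner product space, for `w ≠ 0`,
`sin (angle v w) ≤ ‖v - w‖ / ‖w‖`. -/
theorem sin_angle_le_norm_sub_div_norm
    {E : Type*} [NormedAddCommGroup E] [InnerProductSpace ℝ E]
    (v w : E) (hw : w ≠ 0) :
    Real.sin (InnerProductGeometry.angle v w) ≤ ‖v - w‖ / ‖w‖ := by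
  have hw' : (0:ℝ) < ‖w‖ := norm_pos_iff.mpr hw
  by_cases hv : v = 0
  · subst hv
    rw [InnerProductGeometry.angle_zero_left, Real.sin_pi_div_two, zero_sub, norm_neg,
      le_div_iff₀ hw', one_mul]
  · have hv' : (0:ℝ) < ‖v‖ := norm_pos_iff.mpr hv
    rw [le_div_iff₀ hw']
    have key := InnerProductGeometry.sin_angle_mul_norm_mul_norm v w
    have h1 : Real.sin (angle v w) * ‖w‖ * ‖v‖ =
        √((inner ℝ v v : ℝ) * (inner ℝ w w : ℝ) - (inner ℝ v w : ℝ) * (inner ℝ v w : ℝ)) := by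
      rw [← key]; ring
    have h2 : √((inner ℝ v v : ℝ) * (inner ℝ w w : ℝ) - (inner ℝ v w : ℝ) * (inner ℝ v w : ℝ)) ≤ ‖v - w‖ * ‖v‖ := by
      rw [show ‖v - w‖ * ‖v‖ = √((‖v - w‖ * ‖v‖)^2) by
        rw [Real.sqrt_sq (by positivity)]]
      apply Real.sqrt_le_sqrt
      have hns : ‖v - w‖^2 = ‖v‖^2 - 2 * (inner ℝ v w : ℝ) + ‖w‖^2 := norm_sub_sq_real v w
      have hvv : (inner ℝ v v : ℝ) = ‖v‖^2 := real_inner_self_eq_norm_sq v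
      have hww : (inner ℝ w w : ℝ) = ‖w‖^2 := real_inner_self_eq_norm_sq w
      nlinarith [sq_nonneg (‖v‖^2 - (inner ℝ v w : ℝ)), sq_nonneg ‖v‖]
    have := h1 ▸ h2
    calc Real.sin (angle v w) * ‖w‖
        = Real.sin (angle v w) * ‖w‖ * ‖v‖ / ‖v‖ := by field_simp
      _ ≤ ‖v - w‖ * ‖v‖ / ‖v‖ := by gcongr
      _ = ‖v - w‖ := by field_simp
end

section
/- Fix d ∈ ℕ and work in E = EuclideanSpace ℝ (Fin d). Let v^C, α, u ∈ E with v^C ≠ 0, let ε ≥ 0 with |α i| ≤ ε for every i : Fin d, and let v ∈ E be the vector with coordinates v i = v^C i + α i · u i. Then sin(angle(v, v^C)) ≤ ε · ‖u‖ / ‖v^C‖. -/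
open InnerProductGeometry Real
open scoped RealInnerProductSpace

lemma sin_angle_mul_norm_le {V : Type*} [NormedAddCommGroup V] [InnerProductSpace ℝ V]
    (x y : V) : Real.sin (InnerProductGeometry.angle x y) * ‖y‖ ≤ ‖x - y‖ := by
  by_cases hx : x = 0
  · simp [hx, InnerProductGeometry.angle_zero_left]
  have hxn : 0 < ‖x‖ := norm_pos_iff.mpr hx
  rw [← mul_le_mul_iff_right₀ hxn, show ‖x‖ * (Real.sin (angle x y) * ‖y‖)
      = Real.sin (angle x y) * (‖x‖ * ‖y‖) by ring, sin_angle_mul_norm_mul_norm]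
  have h1 : (inner ℝ x x : ℝ) * (inner ℝ y y : ℝ) - (inner ℝ x y : ℝ) * (inner ℝ x y : ℝ) ≤ (‖x‖ * ‖x - y‖) ^ 2 := by
    have hxy : ‖x - y‖ ^ 2 = ‖x‖ ^ 2 - 2 * (inner ℝ x y : ℝ) + ‖y‖ ^ 2 :=
      norm_sub_sq_real x y
    have hxx : (inner ℝ x x : ℝ) = ‖x‖ ^ 2 := real_inner_self_eq_norm_sq x
    have hyy : (inner ℝ y y : ℝ) = ‖y‖ ^ 2 := real_inner_self_eq_norm_sq y
    nlinarith [sq_nonneg (‖x‖ ^ 2 - (inner ℝ x y : ℝ))]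
  calc √((inner ℝ x x : ℝ) * (inner ℝ y y : ℝ) - (inner ℝ x y : ℝ) * (inner ℝ x y : ℝ)) ≤ √((‖x‖ * ‖x - y‖) ^ 2) :=
        Real.sqrt_le_sqrt h1
    _ = ‖x‖ * ‖x - y‖ := Real.sqrt_sq (by positivity)

/-- Sine form of alignment preservation: if `v i = vC i + α i * u i` with
`|α i| ≤ ε`, then `sin (angle v vC) ≤ ε * ‖u‖ / ‖vC‖`. -/
theorem sin_angle_fused_le
    (d : ℕ) (vC α u v : EuclideanSpace ℝ (Fin d)) (hvC : vC ≠ 0)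
    (ε : ℝ) (hε : 0 ≤ ε) (hα : ∀ i : Fin d, |α i| ≤ ε)
    (hv : ∀ i : Fin d, v i = vC i + α i * u i) :
    Real.sin (InnerProductGeometry.angle v vC) ≤ ε * ‖u‖ / ‖vC‖ := by
  have hvCn : 0 < ‖vC‖ := norm_pos_iff.mpr hvC
  have hdiff : ‖v - vC‖ ≤ ε * ‖u‖ := by
    rw [EuclideanSpace.norm_eq]
    have h2 : ε * ‖u‖ = √((ε * ‖u‖) ^ 2) := (Real.sqrt_sq (by positivity)).symm
    rw [h2]
    apply Real.sqrt_le_sqrt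
    have hnu : ‖u‖ ^ 2 = ∑ i, u i ^ 2 := by
      rw [EuclideanSpace.norm_eq, Real.sq_sqrt (by positivity)]
      simp [sq_abs]
    rw [mul_pow, hnu, Finset.mul_sum]
    apply Finset.sum_le_sum
    intro i _
    have : (v - vC) i = α i * u i := by
      simp only [PiLp.sub_apply, hv i]; ring
    rw [this]
    have h3 : |α i * u i| ≤ ε * |u i| := by
      rw [abs_mul]
      exact mul_le_mul_of_nonneg_right (hα i) (abs_nonneg _)
    calc ‖α i * u i‖ ^ 2 = |α i * u i| ^ 2 := by rw [Real.norm_eq_abs]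
      _ ≤ (ε * |u i|) ^ 2 := by
          apply pow_le_pow_left₀ (abs_nonneg _) h3
      _ = ε ^ 2 * u i ^ 2 := by rw [mul_pow, sq_abs]
  have key := sin_angle_mul_norm_le v vC
  rw [le_div_iff₀ hvCn]
  linarith
end

section
/- Fix d ∈ ℕ and work in E = EuclideanSpace ℝ (Fin d). Let v^C, α, u ∈ E with v^C ≠ 0, let ε ≥ 0 with |α i| ≤ ε for every i : Fin d and ε · ‖u‖ ≤ ‖v^C‖, and let v ∈ E be the vector with coordinates v i = v^C i + α i · u i. Then angle(v, v^C) ≤ arcsin(ε · ‖u‖ / ‖v^C‖). -/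
open InnerProductGeometry Real
open scoped RealInnerProductSpace

/-- Alignment preservation (arcsin form): if `v i = vC i + α i * u i` with
`|α i| ≤ ε` and `ε * ‖u‖ ≤ ‖vC‖`, then `angle v vC ≤ arcsin (ε * ‖u‖ / ‖vC‖)`. -/
theorem angle_fused_le_arcsin
    (d : ℕ) (vC α u v : EuclideanSpace ℝ (Fin d)) (hvC : vC ≠ 0)
    (ε : ℝ) (hε : 0 ≤ ε) (hα : ∀ i : Fin d, |α i| ≤ ε)
    (hsmall : ε * ‖u‖ ≤ ‖vC‖)
    (hv : ∀ i : Fin d, v i = vC i + α i * u i) :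
    InnerProductGeometry.angle v vC ≤ Real.arcsin (ε * ‖u‖ / ‖vC‖) := by
  have hvCn : (0:ℝ) < ‖vC‖ := norm_pos_iff.mpr hvC
  set w : EuclideanSpace ℝ (Fin d) := v - vC with hwdef
  have hwi : ∀ i, w i = α i * u i := by
    intro i; simp [hwdef, hv i]
  -- norm bound on w
  have hw : ‖w‖ ≤ ε * ‖u‖ := by
    rw [EuclideanSpace.norm_eq, EuclideanSpace.norm_eq]
    rw [show ε * √(∑ i, ‖u i‖^2) = √(ε^2 * ∑ i, ‖u i‖^2) by
      rw [Real.sqrt_mul (sq_nonneg ε), Real.sqrt_sq hε]]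
    apply Real.sqrt_le_sqrt
    rw [Finset.mul_sum]
    apply Finset.sum_le_sum
    intro i _
    rw [hwi i]
    have h1 : |α i * u i| ≤ ε * |u i| := by
      rw [abs_mul]
      exact mul_le_mul_of_nonneg_right (hα i) (abs_nonneg _)
    calc ‖α i * u i‖^2 = |α i * u i|^2 := by rw [Real.norm_eq_abs]
      _ ≤ (ε * |u i|)^2 := by
          apply pow_le_pow_left₀ (abs_nonneg _) h1
      _ = ε^2 * ‖u i‖^2 := by rw [Real.norm_eq_abs]; ring
  have hveq : v = vC + w := by simp [hwdef]
  have hib : |(⟪w, vC⟫ : ℝ)| ≤ ‖w‖ * ‖vC‖ := abs_real_inner_le_norm _ _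
  have hinner : 0 ≤ (⟪v, vC⟫ : ℝ) := by
    rw [hveq, inner_add_left, real_inner_self_eq_norm_sq]
    have h2 : ‖w‖ * ‖vC‖ ≤ ‖vC‖ * ‖vC‖ := by
      apply mul_le_mul_of_nonneg_right (hw.trans hsmall) hvCn.le
    have := abs_le.1 hib
    nlinarith
  have hangle2 : angle v vC ≤ π / 2 := by
    unfold InnerProductGeometry.angle
    exact Real.arccos_le_pi_div_two.mpr
      (div_nonneg hinner (mul_nonneg (norm_nonneg _) (norm_nonneg _)))
  by_cases hv0 : v = 0
  · -- then ‖w‖ = ‖vC‖ and t = 1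
    have : ‖w‖ = ‖vC‖ := by rw [hwdef, hv0]; simp
    have ht : ε * ‖u‖ / ‖vC‖ = 1 := by
      have : ε * ‖u‖ = ‖vC‖ := le_antisymm hsmall (this ▸ hw)
      rw [this, div_self hvCn.ne']
    rw [hv0, ht, InnerProductGeometry.angle_zero_left, Real.arcsin_one]
  · have hvn : (0:ℝ) < ‖v‖ := norm_pos_iff.mpr hv0
    have hsin := InnerProductGeometry.sin_angle_mul_norm_mul_norm v vC
    set t := ε * ‖u‖ / ‖vC‖ with htdef
    have ht0 : 0 ≤ t := div_nonneg (mul_nonneg hε (norm_nonneg _)) hvCn.le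
    have hkey : √(⟪v, v⟫ * ⟪vC, vC⟫ - ⟪v, vC⟫ * ⟪v, vC⟫) ≤ t * (‖v‖ * ‖vC‖) := by
      rw [show t * (‖v‖ * ‖vC‖) = √((t * (‖v‖ * ‖vC‖))^2) by
        rw [Real.sqrt_sq (by positivity)]]
      apply Real.sqrt_le_sqrt
      have hvv : (⟪v, v⟫ : ℝ) = ‖v‖^2 := real_inner_self_eq_norm_sq v
      have hcc : (⟪vC, vC⟫ : ℝ) = ‖vC‖^2 := real_inner_self_eq_norm_sq vC
      have hvc : (⟪v, vC⟫ : ℝ) = ‖vC‖^2 + ⟪w, vC⟫ := by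
        rw [hveq, inner_add_left, real_inner_self_eq_norm_sq]
      have hv2 : ‖v‖^2 = ‖vC‖^2 + 2 * ⟪w, vC⟫ + ‖w‖^2 := by
        rw [hveq, @norm_add_sq_real, real_inner_comm]
      have hwle : ‖w‖^2 ≤ (ε * ‖u‖)^2 :=
        pow_le_pow_left₀ (norm_nonneg _) hw 2
      have ht2 : t^2 * ‖vC‖^2 = (ε * ‖u‖)^2 := by
        rw [htdef]; field_simp
      nlinarith [sq_nonneg ((⟪w, vC⟫ : ℝ) + ‖w‖^2), sq_nonneg (‖v‖ * ‖vC‖), hvn.le]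
    have hsinle : Real.sin (angle v vC) ≤ t := by
      have hpos : (0:ℝ) < ‖v‖ * ‖vC‖ := mul_pos hvn hvCn
      rw [← mul_le_mul_iff_of_pos_right hpos, hsin]
      exact hkey
    calc angle v vC = Real.arcsin (Real.sin (angle v vC)) := by
          rw [Real.arcsin_sin (by linarith [InnerProductGeometry.angle_nonneg v vC, Real.pi_pos]) hangle2]
      _ ≤ Real.arcsin t := Real.monotone_arcsin hsinle
end

section
/- Fix d ∈ ℕ and work in E = EuclideanSpace ℝ (Fin d). Let v^C, α, u ∈ E with v^C ≠ 0, let ε ≥ 0 with |α i| ≤ ε for every i : Fin d and ε · ‖u‖ ≤ ‖v^C‖, and let v ∈ E be the vector with coordinates v i = v^C i + α i · u i. Then cos(angle(v, v^C)) ≥ √(1 − (ε · ‖u‖ / ‖v^C‖)²). -/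
open InnerProductGeometry Real
local notation "⟪" x ", " y "⟫_ℝ" => @inner ℝ _ _ x y

set_option maxHeartbeats 1600000

/-- Cosine form of alignment preservation: if `v i = vC i + α i * u i` with
`|α i| ≤ ε` and `ε * ‖u‖ ≤ ‖vC‖`, then
`cos (angle v vC) ≥ √(1 - (ε * ‖u‖ / ‖vC‖)²)`. -/
theorem cos_angle_fused_ge
    (d : ℕ) (vC α u v : EuclideanSpace ℝ (Fin d)) (hvC : vC ≠ 0)
    (ε : ℝ) (hε : 0 ≤ ε) (hα : ∀ i : Fin d, |α i| ≤ ε)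
    (hsmall : ε * ‖u‖ ≤ ‖vC‖)
    (hv : ∀ i : Fin d, v i = vC i + α i * u i) :
    Real.cos (InnerProductGeometry.angle v vC) ≥
      Real.sqrt (1 - (ε * ‖u‖ / ‖vC‖) ^ 2) := by
  have hn : 0 < ‖vC‖ := norm_pos_iff.mpr hvC
  set w : EuclideanSpace ℝ (Fin d) := v - vC with hwdef
  have hvw : v = vC + w := by simp [hwdef]
  have hwi : ∀ i, w i = α i * u i := by
    intro i
    simp [hwdef, hv i]
  -- ‖w‖ ≤ ε * ‖u‖
  have hδr : ‖w‖ ≤ ε * ‖u‖ := by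
    have hsum : ∑ i, ‖w i‖ ^ 2 ≤ ε ^ 2 * ∑ i, ‖u i‖ ^ 2 := by
      rw [Finset.mul_sum]
      apply Finset.sum_le_sum
      intro i _
      have h1 := hα i
      have h2 : |w i| = |α i| * |u i| := by rw [hwi i, abs_mul]
      have h3 : (0 : ℝ) ≤ |u i| := abs_nonneg _
      rw [Real.norm_eq_abs, Real.norm_eq_abs, h2]
      nlinarith [abs_nonneg (α i), mul_le_mul h1 h1 (abs_nonneg (α i)) hε, sq_nonneg (u i)]
    calc ‖w‖ = Real.sqrt (∑ i, ‖w i‖ ^ 2) := EuclideanSpace.norm_eq w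
      _ ≤ Real.sqrt (ε ^ 2 * ∑ i, ‖u i‖ ^ 2) := Real.sqrt_le_sqrt hsum
      _ = ε * Real.sqrt (∑ i, ‖u i‖ ^ 2) := by
          rw [Real.sqrt_mul (sq_nonneg ε), Real.sqrt_sq hε]
      _ = ε * ‖u‖ := by rw [← EuclideanSpace.norm_eq u]
  set n : ℝ := ‖vC‖ with hndef
  set r : ℝ := ε * ‖u‖ with hrdef
  set δ : ℝ := ‖w‖ with hδdef
  set T : ℝ := ⟪w, vC⟫_ℝ with hTdef
  have hrn : r ≤ n := hsmall
  have hδ0 : 0 ≤ δ := norm_nonneg _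
  have hr0 : 0 ≤ r := le_trans hδ0 hδr
  have hTb : |T| ≤ δ * n := abs_real_inner_le_norm w vC
  have hinner : ⟪v, vC⟫_ℝ = n ^ 2 + T := by
    rw [hvw, inner_add_left, real_inner_self_eq_norm_sq]
  have hv2 : ‖v‖ ^ 2 = n ^ 2 + 2 * T + δ ^ 2 := by
    rw [hvw, @norm_add_sq_real, real_inner_comm]
  have hTlb : -(δ * n) ≤ T := neg_le_of_abs_le hTb
  have hinn0 : 0 ≤ n ^ 2 + T := by nlinarith
  have hcos : Real.cos (InnerProductGeometry.angle v vC)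
      = (n ^ 2 + T) / (‖v‖ * n) := by
    rw [InnerProductGeometry.cos_angle, hinner]
  have hcos0 : 0 ≤ Real.cos (InnerProductGeometry.angle v vC) := by
    rw [hcos]
    positivity
  -- key algebraic inequality
  have key : (n ^ 2 + 2 * T + δ ^ 2) * (n ^ 2 - r ^ 2) ≤ (n ^ 2 + T) ^ 2 := by
    have h5 : 0 ≤ (n ^ 2 - r ^ 2) * (r ^ 2 - δ ^ 2) :=
      mul_nonneg (by nlinarith) (by nlinarith)
    nlinarith [sq_nonneg (r ^ 2 + T), h5]
  have hsq : 1 - (r / n) ^ 2 ≤ (Real.cos (InnerProductGeometry.angle v vC)) ^ 2 := by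
    rw [hcos, div_pow]
    have h1 : 1 - r ^ 2 / n ^ 2 = (n ^ 2 - r ^ 2) / n ^ 2 := by
      field_simp
    rw [h1]
    by_cases hN : ‖v‖ = 0
    · have hδn : n ≤ δ := by
        have : v = 0 := norm_eq_zero.mp hN
        have : w = -vC := by rw [hwdef, this]; simp
        rw [hδdef, this, norm_neg]
      have hnr : n ^ 2 - r ^ 2 ≤ 0 := by nlinarith
      rw [hN]
      have h0 : ((n ^ 2 + T) / (0 * n)) ^ 2 = (0:ℝ) := by norm_num
      rw [h0]
      exact div_nonpos_of_nonpos_of_nonneg hnr (sq_nonneg n)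
    · have hN0 : 0 < ‖v‖ := lt_of_le_of_ne (norm_nonneg _) (Ne.symm hN)
      rw [div_pow, div_le_div_iff₀ (by positivity) (by positivity)]
      calc (n ^ 2 - r ^ 2) * (‖v‖ * n) ^ 2
          = ((n ^ 2 + 2 * T + δ ^ 2) * (n ^ 2 - r ^ 2)) * n ^ 2 := by
            rw [mul_pow (‖v‖) n 2, hv2]; ring
        _ ≤ (n ^ 2 + T) ^ 2 * n ^ 2 := by
            apply mul_le_mul_of_nonneg_right key (sq_nonneg n)
  calc Real.sqrt (1 - (r / n) ^ 2)
      ≤ Real.sqrt ((Real.cos (InnerProductGeometry.angle v vC)) ^ 2) :=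
        Real.sqrt_le_sqrt hsq
    _ = Real.cos (InnerProductGeometry.angle v vC) := Real.sqrt_sq hcos0
end

section
/- Fix d ∈ ℕ and work in E = EuclideanSpace ℝ (Fin d). Let v^C, α, u ∈ E with v^C ≠ 0, let ε ≥ 0 with |α i| ≤ ε for every i : Fin d and ε · ‖u‖ ≤ ‖v^C‖, and let v ∈ E be the vector with coordinates v i = v^C i + α i · u i. Then angle(v, v^C) ≤ (π/2) · ε · ‖u‖ / ‖v^C‖. -/
open InnerProductGeometry Real

/-- Linear ("first order in ε") form of alignment preservation: if
`v i = vC i + α i * u i` with `|α i| ≤ ε` and `ε * ‖u‖ ≤ ‖vC‖`, then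
`angle v vC ≤ (π / 2) * ε * ‖u‖ / ‖vC‖`. -/
theorem angle_fused_le_linear
    (d : ℕ) (vC α u v : EuclideanSpace ℝ (Fin d)) (hvC : vC ≠ 0)
    (ε : ℝ) (hε : 0 ≤ ε) (hα : ∀ i : Fin d, |α i| ≤ ε)
    (hsmall : ε * ‖u‖ ≤ ‖vC‖)
    (hv : ∀ i : Fin d, v i = vC i + α i * u i) :
    InnerProductGeometry.angle v vC ≤ (Real.pi / 2) * ε * ‖u‖ / ‖vC‖ := by
  have hvC0 : (0:ℝ) < ‖vC‖ := norm_pos_iff.mpr hvC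
  -- the perturbation
  set w : EuclideanSpace ℝ (Fin d) := v - vC with hwdef
  have hw : ∀ i, w i = α i * u i := by
    intro i
    simp [hwdef, hv i]
  -- norm of w bounded by ε * ‖u‖
  have hwnorm : ‖w‖ ≤ ε * ‖u‖ := by
    have h1 : ‖w‖ = Real.sqrt (∑ i, ‖w i‖ ^ 2) := by
      rw [EuclideanSpace.norm_eq]
    have h2 : ε * ‖u‖ = Real.sqrt (∑ i, ε ^ 2 * ‖u i‖ ^ 2) := by
      rw [← Finset.mul_sum, Real.sqrt_mul (by positivity), ← EuclideanSpace.norm_eq,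
        Real.sqrt_sq hε]
    rw [h1, h2]
    apply Real.sqrt_le_sqrt
    apply Finset.sum_le_sum
    intro i _
    rw [hw i]
    have := hα i
    have h3 : ‖α i * u i‖ = |α i| * ‖u i‖ := by
      simp [abs_mul, Real.norm_eq_abs]
    rw [h3, mul_pow]
    gcongr
  have hvwc : v = vC + w := by simp [hwdef]
  -- inner product lower bound
  have hinnervC : @inner ℝ _ _ vC vC = ‖vC‖ ^ 2 := real_inner_self_eq_norm_sq vC
  have hcs : |@inner ℝ _ _ w vC| ≤ ‖w‖ * ‖vC‖ := abs_real_inner_le_norm w vC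
  have hinner : @inner ℝ _ _ v vC = ‖vC‖ ^ 2 + @inner ℝ _ _ w vC := by
    rw [hvwc, inner_add_left, hinnervC]
  have hwle : ‖w‖ ≤ ‖vC‖ := hwnorm.trans hsmall
  have hinner_nonneg : 0 ≤ @inner ℝ _ _ v vC := by
    rw [hinner]
    nlinarith [abs_le.mp hcs, norm_nonneg w]
  by_cases hv0 : v = 0
  · -- degenerate case: angle is π/2 and RHS ≥ π/2
    have hwvC : w = -vC := by rw [hwdef, hv0]; simp
    have : ‖vC‖ ≤ ε * ‖u‖ := by
      have : ‖w‖ = ‖vC‖ := by rw [hwvC, norm_neg]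
      linarith [hwnorm]
    rw [hv0, angle_zero_left, le_div_iff₀ hvC0]
    nlinarith [Real.pi_pos]
  · have hv0' : (0:ℝ) < ‖v‖ := norm_pos_iff.mpr hv0
    set θ := InnerProductGeometry.angle v vC with hθ
    have hθ0 : 0 ≤ θ := angle_nonneg v vC
    -- θ ≤ π/2 since cos θ ≥ 0
    have hθle : θ ≤ π / 2 := by
      rw [hθ, InnerProductGeometry.angle]
      apply (Real.arccos_le_pi_div_two).mpr
      positivity
    -- sin bound: sin θ * ‖vC‖ ≤ ‖w‖
    have hsin : Real.sin θ * ‖vC‖ ≤ ε * ‖u‖ := by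
      have hkey := sin_angle_mul_norm_mul_norm v vC
      rw [← hθ] at hkey
      have hvv : @inner ℝ _ _ v v = ‖v‖ ^ 2 := real_inner_self_eq_norm_sq v
      have hww : ‖w‖ ^ 2 = ‖v‖ ^ 2 - 2 * @inner ℝ _ _ v vC + ‖vC‖ ^ 2 := by
        rw [hwdef]; exact norm_sub_sq_real v vC
      have hle : @inner ℝ _ _ v v * @inner ℝ _ _ vC vC -
          @inner ℝ _ _ v vC * @inner ℝ _ _ v vC ≤ ‖v‖ ^ 2 * ‖w‖ ^ 2 := by
        rw [hvv, hinnervC]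
        nlinarith [sq_nonneg (‖v‖ ^ 2 - @inner ℝ _ _ v vC)]
      have hsqrt : Real.sqrt (@inner ℝ _ _ v v * @inner ℝ _ _ vC vC -
          @inner ℝ _ _ v vC * @inner ℝ _ _ v vC) ≤ ‖v‖ * ‖w‖ := by
        have : Real.sqrt (‖v‖ ^ 2 * ‖w‖ ^ 2) = ‖v‖ * ‖w‖ := by
          rw [← mul_pow, Real.sqrt_sq (by positivity)]
        rw [← this]
        exact Real.sqrt_le_sqrt hle
      have h4 : Real.sin θ * (‖v‖ * ‖vC‖) ≤ ‖v‖ * (ε * ‖u‖) := by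
        rw [hkey]
        refine hsqrt.trans ?_
        gcongr
      have := (mul_le_mul_iff_right₀ hv0').mp (by linarith [h4] : ‖v‖ * (Real.sin θ * ‖vC‖) ≤ ‖v‖ * (ε * ‖u‖))
      exact this
    -- Jordan's inequality
    have hjordan : 2 / π * θ ≤ Real.sin θ := Real.mul_le_sin hθ0 hθle
    have hπ : (0:ℝ) < π := Real.pi_pos
    rw [le_div_iff₀ hvC0]
    have hθsin : θ ≤ π / 2 * Real.sin θ := by
      have h := mul_le_mul_of_nonneg_left hjordan (le_of_lt (half_pos hπ))
      have heq : π / 2 * (2 / π * θ) = θ := by field_simp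
      linarith [heq ▸ h]
    have h2 := mul_le_mul_of_nonneg_left hsin (le_of_lt (half_pos hπ))
    calc θ * ‖vC‖ ≤ (π / 2 * Real.sin θ) * ‖vC‖ := by
          exact mul_le_mul_of_nonneg_right hθsin (le_of_lt hvC0)
      _ = π / 2 * (Real.sin θ * ‖vC‖) := by ring
      _ ≤ π / 2 * (ε * ‖u‖) := h2
      _ = π / 2 * ε * ‖u‖ := by ring
end

section
/- Let ι be a type with decidable equality, S a nonempty finite subset of ι with |S| = N, and g : List ι → ι → ℝ a history-dependent score function. Then the sum of P_g(l) over all duplicate-free lists l of length N whose elements are exactly S equals 1; that is, the Plackett–Luce model defines a probability distribution over the orderings of S. -/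
open Real

/-- The Plackett–Luce probability of selecting the items of the list (second
argument) in order, given an already-selected history (first argument), under a
history-dependent score function `g : List ι → ι → ℝ`, with candidates drawn
from the finite ground set `S`. At each step the probability of picking `d`
given history `hist` is `exp (g hist d) / ∑_{d' ∈ S \ hist} exp (g hist d')`. -/
noncomputable def PLProb {ι : Type*} [DecidableEq ι] (S : Finset ι)
    (g : List ι → ι → ℝ) : List ι → List ι → ℝ
  | _, [] => 1
  | hist, d :: rest =>
      (Real.exp (g hist d) / ∑ d' ∈ S \ hist.toFinset, Real.exp (g hist d')) *
        PLProb S g (hist ++ [d]) rest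

lemma perm_toList_erase {ι : Type*} [DecidableEq ι] (R : Finset ι) (d : ι) :
    (R.erase d).toList.Perm (R.toList.erase d) := by
  apply (List.perm_ext_iff_of_nodup (R.erase d).nodup_toList
    (R.nodup_toList.erase d)).2
  intro a
  simp [R.nodup_toList.mem_erase_iff, Finset.mem_erase]

lemma PLProb_key {ι : Type*} [DecidableEq ι] (S : Finset ι) (g : List ι → ι → ℝ) :
    ∀ (R : Finset ι) (hist : List ι), S \ hist.toFinset = R →
      ∑ l ∈ R.toList.permutations.toFinset, PLProb S g hist l = 1 := by
  intro R
  induction R using Finset.strongInduction with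
  | _ R IH =>
    intro hist hR
    rcases R.eq_empty_or_nonempty with rfl | hne
    · simp [PLProb]
    · have hsplit : R.toList.permutations.toFinset =
          R.biUnion (fun d =>
            ((R.erase d).toList.permutations.toFinset).image (d :: ·)) := by
        ext l
        simp only [List.mem_toFinset, List.mem_permutations, Finset.mem_biUnion,
          Finset.mem_image]
        constructor
        · intro h
          match l, h with
          | [], h =>
            exfalso
            have := h.length_eq
            simp [Finset.length_toList] at this
            exact hne.card_pos.ne' this.symm
          | d :: rest, h =>
            have h' := List.cons_perm_iff_perm_erase.1 h
            refine ⟨d, Finset.mem_toList.1 h'.1, rest, ?_, rfl⟩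
            exact h'.2.trans (perm_toList_erase R d).symm
        · rintro ⟨d, hd, rest, hrest, rfl⟩
          exact List.cons_perm_iff_perm_erase.2
            ⟨Finset.mem_toList.2 hd, hrest.trans (perm_toList_erase R d)⟩
      rw [hsplit, Finset.sum_biUnion]
      · have hZpos : (0:ℝ) < ∑ d' ∈ S \ hist.toFinset, Real.exp (g hist d') := by
          rw [hR]
          exact Finset.sum_pos (fun i _ => Real.exp_pos _) hne
        have step : ∀ d ∈ R,
            (∑ l ∈ ((R.erase d).toList.permutations.toFinset).image (d :: ·),
              PLProb S g hist l) =
            Real.exp (g hist d) / ∑ d' ∈ S \ hist.toFinset, Real.exp (g hist d') := by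
          intro d hd
          rw [Finset.sum_image (by intro a _ b _ h; simpa using h)]
          have hrec : ∑ rest ∈ (R.erase d).toList.permutations.toFinset,
              PLProb S g (hist ++ [d]) rest = 1 := by
            apply IH (R.erase d) (Finset.erase_ssubset hd)
            rw [← hR]
            ext x
            simp only [Finset.mem_sdiff, List.toFinset_append, List.toFinset_cons,
              List.toFinset_nil, Finset.mem_union, Finset.mem_erase, Finset.mem_insert,
              Finset.mem_singleton, Finset.notMem_empty, LawfulSingleton.insert_empty_eq]
            tauto
          simp only [PLProb]
          rw [← Finset.mul_sum, hrec, mul_one]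
        rw [Finset.sum_congr rfl step, ← Finset.sum_div, hR]
        exact div_self (hR ▸ hZpos).ne'
      · intro a _ b _ hab
        simp only [Finset.disjoint_left, Finset.mem_image]
        rintro l ⟨x, _, rfl⟩ ⟨y, _, h⟩
        simp only [List.cons.injEq] at h
        exact hab h.1.symm

/-- Normalisation of the Plackett–Luce model: the probabilities of all
duplicate-free orderings of the `N` elements of `S` (i.e. all permutations of
`S.toList`) sum to `1`. -/
theorem PLProb_sum_permutations_eq_one
    {ι : Type*} [DecidableEq ι] (S : Finset ι) (hS : S.Nonempty)
    (N : ℕ) (hN : S.card = N) (g : List ι → ι → ℝ) :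
    ∑ l ∈ S.toList.permutations.toFinset, PLProb S g [] l = 1 := by
  exact PLProb_key S g S [] (by simp)
end
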